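/- For the weighted 1-D fused lasso with input y ∈ ℝⁿ and nonnegative weights α, the number of distinct linear segments of the solution path γ ↦ x*(γ) is at most 8·C(n,2) + 1 = O(n²). -/

import Mathlib

/-!
For `γ₀ > 0` the optimality conditions of the minimizer `z = x*(γ₀)` say that the cumulative
residual `Σ_{u<m} (z u - y u)` equals `± γ₀ α` at each jump of `z` (with the sign of the jump) and
lies in `[-γ₀ α, γ₀ α]` inside each block of constant value. Keeping the blocks and the jump signs
and solving these equations for `γ` near `γ₀` gives block values affine in `γ`; the cumulative
residual inside a block `[i, j)` is then affine in `γ` as well, so the set of `γ` for which the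
bounds inside the block still hold is an interval depending only on `(i, j)` and the two boundary
signs. Hence the candidate remains optimal near `γ₀` unless `γ₀` is an endpoint of one of these
intervals: at most `2 · 4 · C(n + 1, 2)` critical values. Away from them the path is locally
affine, hence affine on each gap, and by its `1/2`-Hölder continuity also on the closed segments.
-/

/-- Objective of the weighted 1-D fused lasso on an input of size `n+1`. -/
noncomputable def fusedObj (n : ℕ) (y : Fin (n + 1) → ℝ) (α : Fin n → ℝ) (γ : ℝ)
    (x : Fin (n + 1) → ℝ) : ℝ :=
  (1 / 2) * ∑ t, (x t - y t) ^ 2 + γ * ∑ t : Fin n, α t * |x t.succ - x t.castSucc|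

open Filter Topology Set

lemma nonpos_of_eventually_mul_le_sq {X c : ℝ}
    (h : ∀ᶠ t in 𝓝[>] (0 : ℝ), X * t ≤ c * t ^ 2) : X ≤ 0 := by
  have hlim : Tendsto (fun t => c * t) (𝓝[>] (0 : ℝ)) (𝓝 0) :=
    ((continuous_const.mul continuous_id).tendsto' 0 0 (mul_zero c)).mono_left nhdsWithin_le_nhds
  refine ge_of_tendsto hlim ?_
  filter_upwards [h, self_mem_nhdsWithin] with t ht (htpos : 0 < t)
  exact le_of_mul_le_mul_right (by nlinarith) htpos

lemma abs_le_and_mul_eq_of_forall_le {W c A D : ℝ} (hA : 0 ≤ A)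
    (h : ∀ ε : ℝ, ε * W ≤ c * ε ^ 2 + A * (|D + ε| - |D|)) :
    |W| ≤ A ∧ W * D = A * |D| := by
  have hup : W - A ≤ 0 := nonpos_of_eventually_mul_le_sq (c := c) <| by
    filter_upwards [self_mem_nhdsWithin] with t (ht : 0 < t)
    nlinarith [h t, abs_add_le D t, abs_of_pos ht]
  have hlow : -W - A ≤ 0 := nonpos_of_eventually_mul_le_sq (c := c) <| by
    filter_upwards [self_mem_nhdsWithin] with t (ht : 0 < t)
    nlinarith [h (-t), abs_add_le D (-t), abs_neg t, abs_of_pos ht]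
  refine ⟨abs_le.mpr ⟨by linarith, by linarith⟩, ?_⟩
  rcases lt_trichotomy D 0 with hD | hD | hD
  · have : W + A ≤ 0 := nonpos_of_eventually_mul_le_sq (c := c) <| by
      filter_upwards [Ioo_mem_nhdsGT (neg_pos.mpr hD)] with t ⟨ht, htD⟩
      nlinarith [h t, abs_of_neg hD, abs_of_neg (show D + t < 0 by linarith)]
    rw [abs_of_neg hD]
    nlinarith
  · simp [hD]
  · have : A - W ≤ 0 := nonpos_of_eventually_mul_le_sq (c := c) <| by
      filter_upwards [Ioo_mem_nhdsGT hD] with t ⟨ht, htD⟩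
      nlinarith [h (-t), abs_of_pos hD, abs_of_pos (show 0 < D + -t by linarith)]
    rw [abs_of_pos hD]
    nlinarith

lemma exists_mem_lt_of_ne_csInf {s : Set ℝ} {x : ℝ} (hx : x ∈ s) (h : x ≠ sInf s) :
    ∃ a ∈ s, a < x := by
  by_cases hs : BddBelow s
  · exact exists_lt_of_csInf_lt ⟨x, hx⟩ (lt_of_le_of_ne (csInf_le hs hx) (Ne.symm h))
  · simpa using not_bddBelow_iff.mp hs x

lemma exists_mem_gt_of_ne_csSup {s : Set ℝ} {x : ℝ} (hx : x ∈ s) (h : x ≠ sSup s) :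
    ∃ b ∈ s, x < b := by
  by_cases hs : BddAbove s
  · exact exists_lt_of_lt_csSup ⟨x, hx⟩ (lt_of_le_of_ne (le_csSup hs hx) h)
  · simpa using not_bddAbove_iff.mp hs x

lemma Set.OrdConnected.mem_nhds_of_ne_csInf_of_ne_csSup {s : Set ℝ} (hs : s.OrdConnected)
    {x : ℝ} (hx : x ∈ s) (hinf : x ≠ sInf s) (hsup : x ≠ sSup s) : s ∈ 𝓝 x := by
  obtain ⟨a, ha, hax⟩ := exists_mem_lt_of_ne_csInf hx hinf
  obtain ⟨b, hb, hxb⟩ := exists_mem_gt_of_ne_csSup hx hsup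
  exact mem_of_superset (Ioo_mem_nhds hax hxb) (Ioo_subset_Icc_self.trans (hs.out ha hb))

lemma IsOpen.exists_affine_of_locally_affine {I : Set ℝ} (hI : IsOpen I) (hI' : IsPreconnected I)
    {f : ℝ → ℝ} (hf : ∀ γ ∈ I, ∃ a b : ℝ, f =ᶠ[𝓝 γ] fun t => a + t * b) :
    ∃ a b : ℝ, ∀ γ ∈ I, f γ = a + γ * b := by
  have hderiv : ∀ γ ∈ I, ∃ b : ℝ, HasDerivAt f b γ ∧ deriv f =ᶠ[𝓝 γ] fun _ => b := by
    intro γ hγ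
    obtain ⟨a, b, hab⟩ := hf γ hγ
    have hlin : ∀ t, HasDerivAt (fun t => a + t * b) b t := fun t => by
      simpa using ((hasDerivAt_id t).mul_const b).const_add a
    refine ⟨b, (hlin γ).congr_of_eventuallyEq hab, ?_⟩
    filter_upwards [hab.eventuallyEq_nhds] with t ht
    rw [ht.deriv_eq, (hlin t).deriv]
  have hdiff : DifferentiableOn ℝ f I := fun γ hγ =>
    (hderiv γ hγ).choose_spec.1.differentiableAt.differentiableWithinAt
  obtain ⟨b, hb⟩ : ∃ b, ∀ γ ∈ I, deriv f γ = b := by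
    refine hI.exists_is_const_of_deriv_eq_zero hI' (fun γ hγ => ?_) (fun γ hγ => ?_)
    · obtain ⟨b, -, hb⟩ := hderiv γ hγ
      exact ((hasDerivAt_const γ b).congr_of_eventuallyEq hb).differentiableAt
        |>.differentiableWithinAt
    · obtain ⟨b, -, hb⟩ := hderiv γ hγ
      simpa using hb.deriv_eq
  obtain ⟨a, ha⟩ := hI.exists_eq_add_of_deriv_eq hI' hdiff (g := fun t => t * b)
    (by fun_prop) (fun γ hγ => by simp [hb γ hγ])
  exact ⟨a, b, fun γ hγ => by rw [ha hγ]; ring⟩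

lemma continuousOn_of_sq_sub_le {f : ℝ → ℝ} {s : Set ℝ} {C : ℝ}
    (h : ∀ a ∈ s, ∀ b ∈ s, (f a - f b) ^ 2 ≤ C * |a - b|) : ContinuousOn f s := by
  refine Metric.continuousOn_iff.mpr fun b hb ε hε => ⟨ε ^ 2 / (|C| + 1), by positivity, ?_⟩
  intro a ha hab
  rw [Real.dist_eq] at hab ⊢
  refine abs_lt_of_sq_lt_sq ?_ hε.le
  calc (f a - f b) ^ 2 ≤ C * |a - b| := h a ha b hb
    _ ≤ (|C| + 1) * |a - b| := by gcongr; linarith [le_abs_self C]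
    _ < (|C| + 1) * (ε ^ 2 / (|C| + 1)) := by gcongr
    _ = ε ^ 2 := by field_simp

lemma exists_strictMono_partition_avoiding (P : Finset ℝ) :
    ∃ (k : ℕ) (c : Fin (k + 1) → ℝ), k ≤ P.card ∧ c 0 = 0 ∧ StrictMono c ∧
      (∀ i : Fin k, ∀ γ ∈ Ioo (c i.castSucc) (c i.succ), γ ∉ P) ∧
      ∀ γ ∈ Ioi (c (Fin.last k)), γ ∉ P := by
  classical
  set F := insert 0 (P.filter (0 < ·))
  have hFcard : F.card ≤ P.card + 1 :=
    (Finset.card_insert_le _ _).trans (Nat.add_le_add_right (Finset.card_filter_le _ _) 1)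
  have hF : F.card = F.card - 1 + 1 :=
    (Nat.sub_add_cancel (Finset.card_pos.mpr ⟨0, Finset.mem_insert_self _ _⟩)).symm
  set c := F.orderEmbOfFin hF
  have hmem : ∀ γ ∈ F, ∃ m, c m = γ := fun γ hγ => by
    rwa [← Finset.mem_coe, ← Finset.range_orderEmbOfFin F hF] at hγ
  have hnonneg : ∀ γ ∈ F, 0 ≤ γ := fun γ hγ => by
    rcases Finset.mem_insert.mp hγ with rfl | hγ
    exacts [le_rfl, (Finset.mem_filter.mp hγ).2.le]
  have hmono : StrictMono c := c.strictMono
  have hc0 : c 0 = 0 := by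
    obtain ⟨m, hm⟩ := hmem 0 (Finset.mem_insert_self _ _)
    exact le_antisymm (hm ▸ hmono.monotone (Fin.zero_le m))
      (hnonneg _ (Finset.orderEmbOfFin_mem F hF 0))
  have hP : ∀ γ ∈ P, c 0 < γ → ∃ m, c m = γ := fun γ hγ hpos =>
    hmem γ (Finset.mem_insert_of_mem (Finset.mem_filter.mpr ⟨hγ, hc0 ▸ hpos⟩))
  refine ⟨F.card - 1, c, by omega, hc0, hmono, fun i γ hγ hγP => ?_, fun γ hγ hγP => ?_⟩
  · obtain ⟨m, rfl⟩ :=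
      hP γ hγP ((hmono.monotone (Fin.zero_le _)).trans_lt hγ.1)
    have h1 := Fin.lt_def.mp (hmono.lt_iff_lt.mp hγ.1)
    have h2 := Fin.lt_def.mp (hmono.lt_iff_lt.mp hγ.2)
    simp only [Fin.val_castSucc, Fin.val_succ] at h1 h2
    omega
  · obtain ⟨m, rfl⟩ := hP γ hγP ((hmono.monotone (Fin.zero_le _)).trans_lt hγ)
    exact absurd (hmono.lt_iff_lt.mp hγ) (not_lt.mpr (Fin.le_last m))

lemma sum_range_mul_by_parts (r e : ℕ → ℝ) (N : ℕ) :
    ∑ u ∈ Finset.range N, r u * e u = (∑ u ∈ Finset.range N, r u) * e (N - 1)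
      - ∑ m ∈ Finset.range N, (∑ u ∈ Finset.range m, r u) * (e m - e (m - 1)) := by
  induction N with
  | zero => simp
  | succ N ih => simp only [Finset.sum_range_succ, ih, Nat.add_sub_cancel]; ring

namespace FusedLasso

open Finset

variable {n : ℕ} (y : Fin (n + 1) → ℝ) (α : Fin n → ℝ)

noncomputable def data (u : ℕ) : ℝ := if h : u < n + 1 then y ⟨u, h⟩ else 0

/-- The weight of the difference `x m - x (m - 1)`; it vanishes for `m = 0` and for `m > n`. -/
noncomputable def weight (m : ℕ) : ℝ := if h : m ≠ 0 ∧ m ≤ n then α ⟨m - 1, by omega⟩ else 0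

noncomputable def cumResid (x : ℕ → ℝ) (m : ℕ) : ℝ := ∑ u ∈ range m, (x u - data y u)

noncomputable def penalty (x : ℕ → ℝ) : ℝ := ∑ m ∈ range (n + 1), weight α m * |x m - x (m - 1)|

noncomputable def obj (γ : ℝ) (x : ℕ → ℝ) : ℝ :=
  (∑ u ∈ range (n + 1), (x u - data y u) ^ 2) / 2 + γ * penalty α x

def IsMinimizer (γ : ℝ) (x : ℕ → ℝ) : Prop := ∀ v, obj y α γ x ≤ obj y α γ v

def IsSubgradAt (γ : ℝ) (x : ℕ → ℝ) (m : ℕ) : Prop :=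
  |cumResid y x m| ≤ γ * weight α m ∧
    cumResid y x m * (x m - x (m - 1)) = γ * weight α m * |x m - x (m - 1)|

def IsKKT (γ : ℝ) (x : ℕ → ℝ) : Prop := ∀ m ≤ n + 1, IsSubgradAt y α γ x m

def prefixShift (x : ℕ → ℝ) (m : ℕ) (ε : ℝ) (u : ℕ) : ℝ := if u < m then x u - ε else x u

variable {y α}

lemma weight_nonneg (hα : ∀ t, 0 ≤ α t) (m : ℕ) : 0 ≤ weight α m := by
  unfold weight
  split_ifs
  exacts [hα _, le_rfl]

@[simp] lemma weight_zero : weight α 0 = 0 := by simp [weight]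

lemma weight_of_lt {m : ℕ} (h : n < m) : weight α m = 0 := by
  rw [weight, dif_neg (by omega)]

lemma fusedObj_eq_obj (γ : ℝ) (v : ℕ → ℝ) :
    fusedObj n y α γ (fun t => v t) = obj y α γ v := by
  have hsq : ∑ t : Fin (n + 1), (v t - y t) ^ 2 = ∑ u ∈ range (n + 1), (v u - data y u) ^ 2 := by
    rw [← Fin.sum_univ_eq_sum_range]
    simp [data, Fin.is_le]
  have hpen : ∑ t : Fin n, α t * |v t.succ - v t.castSucc| = penalty α v := by
    rw [penalty, sum_range_succ', ← Fin.sum_univ_eq_sum_range]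
    simp [weight]
  rw [fusedObj, obj, hsq, hpen]
  ring

lemma penalty_prefixShift (x : ℕ → ℝ) (m : ℕ) (ε : ℝ) :
    penalty α (prefixShift x m ε) =
      penalty α x + weight α m * (|x m - x (m - 1) + ε| - |x m - x (m - 1)|) := by
  have hterm : ∀ k, weight α k * |prefixShift x m ε k - prefixShift x m ε (k - 1)| =
      weight α k * |x k - x (k - 1)| +
        if k = m then weight α m * (|x m - x (m - 1) + ε| - |x m - x (m - 1)|) else 0 := by
    intro k
    rcases lt_trichotomy k m with h | rfl | h
    · simp [prefixShift, h, show k - 1 < m by omega, h.ne]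
    · rcases Nat.eq_zero_or_pos k with rfl | hk
      · simp
      · simp [prefixShift, show k - 1 < k by omega]
        ring_nf
    · simp [prefixShift, not_lt.mpr h.le, show ¬ k - 1 < m by omega, h.ne']
  rw [penalty, sum_congr rfl fun k _ => hterm k, sum_add_distrib, sum_ite_eq', penalty]
  split_ifs with hm
  · rfl
  · rw [weight_of_lt (by simp at hm; omega)]
    simp

lemma sum_sq_prefixShift (x : ℕ → ℝ) {m : ℕ} (hm : m ≤ n + 1) (ε : ℝ) :
    ∑ u ∈ range (n + 1), (prefixShift x m ε u - data y u) ^ 2 =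
      ∑ u ∈ range (n + 1), (x u - data y u) ^ 2 - 2 * ε * cumResid y x m + m * ε ^ 2 := by
  have hterm : ∀ u, (prefixShift x m ε u - data y u) ^ 2 =
      (x u - data y u) ^ 2 + if u < m then ε ^ 2 - 2 * ε * (x u - data y u) else 0 := by
    intro u
    unfold prefixShift
    split_ifs <;> ring
  have hfilter : (range (n + 1)).filter (· < m) = range m := by
    ext u
    simp only [mem_filter, Finset.mem_range]
    omega
  rw [sum_congr rfl fun u _ => hterm u, sum_add_distrib, ← sum_filter, hfilter, sum_sub_distrib,
    sum_const, card_range, cumResid, mul_sum]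
  simp only [nsmul_eq_mul]
  ring

lemma obj_prefixShift (γ : ℝ) (x : ℕ → ℝ) {m : ℕ} (hm : m ≤ n + 1) (ε : ℝ) :
    obj y α γ (prefixShift x m ε) = obj y α γ x - ε * cumResid y x m + m * ε ^ 2 / 2 +
      γ * weight α m * (|x m - x (m - 1) + ε| - |x m - x (m - 1)|) := by
  rw [obj, obj, sum_sq_prefixShift x hm, penalty_prefixShift]
  ring

lemma isKKT_of_isMinimizer (hα : ∀ t, 0 ≤ α t) {γ : ℝ} (hγ : 0 ≤ γ) {x : ℕ → ℝ}
    (hx : IsMinimizer y α γ x) : IsKKT y α γ x := by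
  intro m hm
  refine abs_le_and_mul_eq_of_forall_le (c := m / 2) (mul_nonneg hγ (weight_nonneg hα m))
    fun ε => ?_
  have := hx (prefixShift x m ε)
  rw [obj_prefixShift γ x hm] at this
  linarith

lemma IsKKT.cumResid_top {γ : ℝ} {x : ℕ → ℝ} (hx : IsKKT y α γ x) :
    cumResid y x (n + 1) = 0 := by
  simpa [weight_of_lt (Nat.lt_succ_self n)] using (hx (n + 1) le_rfl).1

lemma IsKKT.obj_add_le {γ : ℝ} {x : ℕ → ℝ} (hx : IsKKT y α γ x) (v : ℕ → ℝ) :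
    obj y α γ x + (∑ u ∈ range (n + 1), (v u - x u) ^ 2) / 2 ≤ obj y α γ v := by
  set e : ℕ → ℝ := fun u => v u - x u
  have hparts : ∑ u ∈ range (n + 1), (x u - data y u) * e u =
      -∑ m ∈ range (n + 1), cumResid y x m * (e m - e (m - 1)) := by
    rw [sum_range_mul_by_parts, ← cumResid, hx.cumResid_top]
    simp [cumResid]
  have hterm : ∀ m ∈ range (n + 1), 0 ≤
      (γ * weight α m * |v m - v (m - 1)| - cumResid y x m * (v m - v (m - 1))) -
        (γ * weight α m * |x m - x (m - 1)| - cumResid y x m * (x m - x (m - 1))) := by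
    intro m hm
    obtain ⟨hsub, hjump⟩ := hx m (by simp at hm; omega)
    have : cumResid y x m * (v m - v (m - 1)) ≤ γ * weight α m * |v m - v (m - 1)| :=
      calc _ ≤ |cumResid y x m| * |v m - v (m - 1)| := by rw [← abs_mul]; exact le_abs_self _
        _ ≤ _ := by gcongr
    linarith
  have hsq : ∀ u, (v u - data y u) ^ 2 =
      (x u - data y u) ^ 2 + 2 * ((x u - data y u) * e u) + e u ^ 2 := fun u => by ring
  have key : obj y α γ v - obj y α γ x - (∑ u ∈ range (n + 1), e u ^ 2) / 2 =
      ∑ m ∈ range (n + 1),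
        ((γ * weight α m * |v m - v (m - 1)| - cumResid y x m * (v m - v (m - 1))) -
          (γ * weight α m * |x m - x (m - 1)| - cumResid y x m * (x m - x (m - 1)))) := by
    have hobj : obj y α γ v - obj y α γ x - (∑ u ∈ range (n + 1), e u ^ 2) / 2 =
        ∑ u ∈ range (n + 1), (x u - data y u) * e u + γ * (penalty α v - penalty α x) := by
      simp only [obj, hsq, sum_add_distrib, ← mul_sum]
      ring
    rw [hobj, hparts, penalty, penalty, mul_sub, mul_sum, mul_sum, ← sub_eq_zero]
    simp only [← sum_sub_distrib, ← sum_neg_distrib, ← sum_add_distrib]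
    refine sum_eq_zero fun m _ => ?_
    ring
  linarith [sum_nonneg hterm]

lemma IsMinimizer.obj_add_le (hα : ∀ t, 0 ≤ α t) {γ : ℝ} (hγ : 0 ≤ γ) {x : ℕ → ℝ}
    (hx : IsMinimizer y α γ x) (v : ℕ → ℝ) :
    obj y α γ x + (∑ u ∈ range (n + 1), (v u - x u) ^ 2) / 2 ≤ obj y α γ v :=
  (isKKT_of_isMinimizer hα hγ hx).obj_add_le v

lemma eq_of_sum_sq_sub_nonpos {x v : ℕ → ℝ} (h : ∑ u ∈ range (n + 1), (v u - x u) ^ 2 ≤ 0)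
    {u : ℕ} (hu : u ≤ n) : x u = v u := by
  have h0 := (sum_eq_zero_iff_of_nonneg fun w _ => sq_nonneg (v w - x w)).mp
    (le_antisymm h (sum_nonneg fun w _ => sq_nonneg _)) u (Finset.mem_range.mpr (by omega))
  linarith [pow_eq_zero_iff (n := 2) two_ne_zero |>.mp h0]

lemma IsKKT.eq_of_isMinimizer {γ : ℝ} {x v : ℕ → ℝ} (hx : IsKKT y α γ x)
    (hv : IsMinimizer y α γ v) {u : ℕ} (hu : u ≤ n) : x u = v u :=
  eq_of_sum_sq_sub_nonpos (by linarith [hx.obj_add_le v, hv x]) hu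

lemma penalty_nonneg (hα : ∀ t, 0 ≤ α t) (x : ℕ → ℝ) : 0 ≤ penalty α x :=
  sum_nonneg fun m _ => mul_nonneg (weight_nonneg hα m) (abs_nonneg _)

lemma penalty_congr {x v : ℕ → ℝ} (h : ∀ u ≤ n, x u = v u) : penalty α x = penalty α v :=
  sum_congr rfl fun m hm => by
    simp only [Finset.mem_range] at hm
    rw [h m (by omega), h (m - 1) (by omega)]

lemma cumResid_congr {x v : ℕ → ℝ} {m : ℕ} (h : ∀ u < m, x u = v u) :
    cumResid y x m = cumResid y v m :=
  sum_congr rfl fun u hu => by rw [h u (Finset.mem_range.mp hu)]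

lemma IsMinimizer.penalty_le (hα : ∀ t, 0 ≤ α t) {γ : ℝ} (hγ : 0 ≤ γ) {x : ℕ → ℝ}
    (hx : IsMinimizer y α γ x) : penalty α x ≤ penalty α (data y) := by
  have hgrowth := hx.obj_add_le hα hγ (data y)
  have hsymm : ∑ u ∈ range (n + 1), (data y u - x u) ^ 2 =
      ∑ u ∈ range (n + 1), (x u - data y u) ^ 2 := sum_congr rfl fun u _ => by ring
  have hdata : obj y α γ (data y) = γ * penalty α (data y) := by simp [obj]
  rw [hdata, obj, hsymm] at hgrowth
  rcases hγ.lt_or_eq with hγ | rfl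
  · have := sum_nonneg fun u (_ : u ∈ range (n + 1)) => sq_nonneg (x u - data y u)
    exact le_of_mul_le_mul_left (by linarith) hγ
  · refine (penalty_congr fun u hu => ?_).le
    refine (eq_of_sum_sq_sub_nonpos (x := data y) (v := x) ?_ hu).symm
    linarith

lemma sum_sq_sub_le_of_isMinimizer (hα : ∀ t, 0 ≤ α t) {γ γ' : ℝ} (hγ : 0 ≤ γ) (hγ' : 0 ≤ γ')
    {x v : ℕ → ℝ} (hx : IsMinimizer y α γ x) (hv : IsMinimizer y α γ' v) :
    ∑ u ∈ range (n + 1), (v u - x u) ^ 2 ≤ penalty α (data y) * |γ' - γ| := by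
  have h1 := hx.obj_add_le hα hγ v
  have h2 := hv.obj_add_le hα hγ' x
  have hsymm : ∑ u ∈ range (n + 1), (x u - v u) ^ 2 = ∑ u ∈ range (n + 1), (v u - x u) ^ 2 :=
    sum_congr rfl fun u _ => by ring
  have hpen : |penalty α v - penalty α x| ≤ penalty α (data y) :=
    abs_sub_le_of_nonneg_of_le (penalty_nonneg hα v) (hv.penalty_le hα hγ')
      (penalty_nonneg hα x) (hx.penalty_le hα hγ)
  calc ∑ u ∈ range (n + 1), (v u - x u) ^ 2 ≤ (γ' - γ) * (penalty α x - penalty α v) := by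
        simp only [obj, hsymm] at h1 h2
        linarith
    _ ≤ |γ' - γ| * |penalty α v - penalty α x| := by
        rw [abs_sub_comm (penalty α v), ← abs_mul]
        exact le_abs_self _
    _ ≤ penalty α (data y) * |γ' - γ| := by
        rw [mul_comm]
        exact mul_le_mul_of_nonneg_right hpen (abs_nonneg _)

lemma continuousOn_minimizer (hα : ∀ t, 0 ≤ α t) {X : ℝ → ℕ → ℝ}
    (hX : ∀ γ, 0 ≤ γ → IsMinimizer y α γ (X γ)) {u : ℕ} (hu : u ≤ n) :
    ContinuousOn (fun γ => X γ u) (Set.Ici 0) :=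
  continuousOn_of_sq_sub_le fun a ha b hb =>
    (single_le_sum (fun w _ => sq_nonneg (X a w - X b w)) (Finset.mem_range.mpr (by omega))).trans
      (sum_sq_sub_le_of_isMinimizer hα hb ha (hX b hb) (hX a ha))

section Breaks

open scoped Classical

variable (n : ℕ) (x : ℕ → ℝ)

def IsBreak (m : ℕ) : Prop := m = 0 ∨ n < m ∨ x (m - 1) ≠ x m

lemma exists_isBreak_gt (u : ℕ) : ∃ m, u < m ∧ IsBreak n x m :=
  ⟨max u n + 1, by omega, Or.inr (Or.inl (by omega))⟩

noncomputable def prevBreak (u : ℕ) : ℕ := Nat.findGreatest (IsBreak n x) u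

noncomputable def nextBreak (u : ℕ) : ℕ := Nat.find (exists_isBreak_gt n x u)

variable {n x} {u w m : ℕ}

lemma prevBreak_le (u : ℕ) : prevBreak n x u ≤ u := Nat.findGreatest_le u

lemma isBreak_prevBreak (u : ℕ) : IsBreak n x (prevBreak n x u) :=
  Nat.findGreatest_spec (Nat.zero_le u) (Or.inl rfl)

lemma prevBreak_eq_self (h : IsBreak n x u) : prevBreak n x u = u := Nat.findGreatest_eq h

lemma lt_nextBreak (u : ℕ) : u < nextBreak n x u := (Nat.find_spec (exists_isBreak_gt n x u)).1

lemma isBreak_nextBreak (u : ℕ) : IsBreak n x (nextBreak n x u) :=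
  (Nat.find_spec (exists_isBreak_gt n x u)).2

lemma nextBreak_le_of_isBreak (hum : u < m) (hm : IsBreak n x m) : nextBreak n x u ≤ m :=
  Nat.find_min' _ ⟨hum, hm⟩

lemma nextBreak_le (hu : u ≤ n) : nextBreak n x u ≤ n + 1 :=
  nextBreak_le_of_isBreak (by omega) (Or.inr (Or.inl (by omega)))

lemma not_isBreak_of_mem_block (h₁ : prevBreak n x u < m) (h₂ : m < nextBreak n x u) :
    ¬ IsBreak n x m := by
  rcases le_or_gt m u with h | h
  · exact Nat.findGreatest_is_greatest h₁ h
  · exact fun hm => Nat.find_min (exists_isBreak_gt n x u) h₂ ⟨h, hm⟩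

lemma prevBreak_eq_and_nextBreak_eq (h₁ : prevBreak n x u ≤ w) (h₂ : w < nextBreak n x u) :
    prevBreak n x w = prevBreak n x u ∧ nextBreak n x w = nextBreak n x u := by
  constructor
  · refine Nat.findGreatest_eq_iff.mpr ⟨h₁, fun _ => isBreak_prevBreak u, fun m hm hmw => ?_⟩
    exact not_isBreak_of_mem_block hm (by omega)
  · refine (Nat.find_eq_iff _).mpr ⟨⟨h₂, isBreak_nextBreak u⟩, fun m hm ⟨hwm, hb⟩ => ?_⟩
    exact not_isBreak_of_mem_block (by omega) hm hb

lemma prevBreak_sub_one_and_nextBreak_sub_one (h : ¬ IsBreak n x m) :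
    prevBreak n x (m - 1) = prevBreak n x m ∧ nextBreak n x (m - 1) = nextBreak n x m := by
  have hprev : prevBreak n x m ≠ m := fun h' => h (h' ▸ isBreak_prevBreak m)
  have := prevBreak_le (n := n) (x := x) m
  have := lt_nextBreak (n := n) (x := x) m
  exact prevBreak_eq_and_nextBreak_eq (by omega) (by omega)

lemma apply_prevBreak (hu : u ≤ n) : x (prevBreak n x u) = x u := by
  induction u with
  | zero => rw [prevBreak_le 0 |> Nat.le_zero.mp]
  | succ u ih =>
    by_cases h : IsBreak n x (u + 1)
    · rw [prevBreak_eq_self h]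
    · have hjump : x u = x (u + 1) := by
        by_contra hne
        exact h (Or.inr (Or.inr hne))
      rw [prevBreak, Nat.findGreatest_of_not h, ← prevBreak, ih (by omega), hjump]

end Breaks

variable (y α)

/-- The value on the block `[i, j)` of a path whose cumulative residual equals
`γ * si * weight α i` at `i` and `γ * sj * weight α j` at `j`. -/
noncomputable def blockMean (i j : ℕ) (si sj γ : ℝ) : ℝ :=
  (∑ v ∈ Ico i j, data y v + γ * (sj * weight α j - si * weight α i)) / (j - i)

noncomputable def blockResid (i j : ℕ) (si sj γ : ℝ) (m : ℕ) : ℝ :=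
  γ * si * weight α i + (m - i) * blockMean y α i j si sj γ - ∑ v ∈ Ico i m, data y v

noncomputable def jumpSign (x : ℕ → ℝ) (m : ℕ) : ℝ := if x (m - 1) < x m then 1 else -1

/-- Keeps the blocks of `z` and their jump directions, and moves each block value affinely in
`γ` so that the cumulative residual stays on the subgradient bounds at the breaks. -/
noncomputable def candidate (z : ℕ → ℝ) (γ : ℝ) (u : ℕ) : ℝ :=
  blockMean y α (prevBreak n z u) (nextBreak n z u) (jumpSign z (prevBreak n z u))
    (jumpSign z (nextBreak n z u)) γ

variable {y α}

lemma blockResid_self (i j : ℕ) (si sj γ : ℝ) :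
    blockResid y α i j si sj γ i = γ * si * weight α i := by
  simp [blockResid]

lemma blockResid_end {i j : ℕ} (h : i < j) (si sj γ : ℝ) :
    blockResid y α i j si sj γ j = γ * sj * weight α j := by
  have : ((j : ℝ) - i) ≠ 0 := sub_ne_zero.mpr (by exact_mod_cast h.ne')
  rw [blockResid, blockMean]
  field_simp
  ring

lemma blockResid_succ {i m : ℕ} (h : i ≤ m) (j : ℕ) (si sj γ : ℝ) :
    blockResid y α i j si sj γ (m + 1) =
      blockResid y α i j si sj γ m + blockMean y α i j si sj γ - data y m := by
  rw [blockResid, blockResid, sum_Ico_succ_top h]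
  push_cast
  ring

lemma blockResid_eq_add_mul (i j : ℕ) (si sj γ : ℝ) (m : ℕ) :
    blockResid y α i j si sj γ m = blockResid y α i j si sj 0 m +
      γ * (blockResid y α i j si sj 1 m - blockResid y α i j si sj 0 m) := by
  simp only [blockResid, blockMean]
  ring

lemma candidate_eq_add_mul (z : ℕ → ℝ) (γ : ℝ) (u : ℕ) :
    candidate y α z γ u =
      candidate y α z 0 u + γ * (candidate y α z 1 u - candidate y α z 0 u) := by
  simp only [candidate, blockMean]
  ring

lemma continuous_candidate (z : ℕ → ℝ) (u : ℕ) : Continuous fun γ => candidate y α z γ u := by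
  simp only [candidate, blockMean]
  fun_prop

lemma cumResid_candidate (z : ℕ → ℝ) (γ : ℝ) {m : ℕ} (hm : m ≤ n + 1) :
    cumResid y (candidate y α z γ) m =
      blockResid y α (prevBreak n z m) (nextBreak n z m) (jumpSign z (prevBreak n z m))
        (jumpSign z (nextBreak n z m)) γ m := by
  induction m with
  | zero =>
    rw [prevBreak_eq_self (Or.inl rfl), blockResid_self]
    simp [cumResid]
  | succ m ih =>
    have hstep : cumResid y (candidate y α z γ) (m + 1) =
        blockResid y α (prevBreak n z m) (nextBreak n z m) (jumpSign z (prevBreak n z m))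
          (jumpSign z (nextBreak n z m)) γ (m + 1) := by
      rw [cumResid, sum_range_succ, ← cumResid, ih (by omega), blockResid_succ (prevBreak_le m),
        candidate]
      ring
    rw [hstep]
    by_cases h : IsBreak n z (m + 1)
    · have hnext : nextBreak n z m = m + 1 :=
        le_antisymm (nextBreak_le_of_isBreak (by omega) h) (lt_nextBreak m)
      rw [prevBreak_eq_self h, blockResid_self, ← hnext,
        blockResid_end ((prevBreak_le m).trans_lt (lt_nextBreak m))]
    · have hnext : m + 1 < nextBreak n z m :=
        lt_of_le_of_ne (lt_nextBreak m) fun h' => h (h' ▸ isBreak_nextBreak m)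
      obtain ⟨hp, hn⟩ :=
        prevBreak_eq_and_nextBreak_eq (by linarith [prevBreak_le (n := n) (x := z) m]) hnext
      rw [hp, hn]

lemma candidate_sub_one (z : ℕ → ℝ) (γ : ℝ) {m : ℕ} (h : ¬ IsBreak n z m) :
    candidate y α z γ (m - 1) = candidate y α z γ m := by
  obtain ⟨hp, hn⟩ := prevBreak_sub_one_and_nextBreak_sub_one h
  rw [candidate, candidate, hp, hn]

lemma IsKKT.cumResid_of_isBreak {γ : ℝ} {z : ℕ → ℝ} (hz : IsKKT y α γ z) {m : ℕ}
    (hm : m ≤ n + 1) (hb : IsBreak n z m) : cumResid y z m = γ * jumpSign z m * weight α m := by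
  obtain ⟨hsub, hjump⟩ := hz m hm
  rcases hb with rfl | hnm | hne
  · simp [cumResid]
  · rw [weight_of_lt hnm, mul_zero] at hsub ⊢
    exact abs_nonpos_iff.mp hsub
  · unfold jumpSign
    split_ifs with hlt
    · rw [abs_of_pos (sub_pos.mpr hlt)] at hjump
      exact (mul_right_cancel₀ (sub_pos.mpr hlt).ne' hjump).trans (by ring)
    · have hneg : z m - z (m - 1) < 0 :=
        sub_neg.mpr (lt_of_le_of_ne (not_lt.mp hlt) (Ne.symm hne))
      rw [abs_of_neg hneg] at hjump
      have := mul_right_cancel₀ hneg.ne (hjump.trans (neg_mul_comm _ _).symm)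
      linarith

lemma candidate_of_isKKT {γ : ℝ} {z : ℕ → ℝ} (hz : IsKKT y α γ z) {u : ℕ} (hu : u ≤ n) :
    candidate y α z γ u = z u := by
  set i := prevBreak n z u
  set j := nextBreak n z u
  have hij : i < j := (prevBreak_le u).trans_lt (lt_nextBreak u)
  have hj : j ≤ n + 1 := nextBreak_le hu
  have hconst : ∀ w ∈ Finset.Ico i j, z w = z u := fun w hw => by
    obtain ⟨hw₁, hw₂⟩ := Finset.mem_Ico.mp hw
    rw [← apply_prevBreak (n := n) (x := z) (u := w) (by omega),
      (prevBreak_eq_and_nextBreak_eq hw₁ hw₂).1, apply_prevBreak (x := z) hu]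
  have hsum : cumResid y z j - cumResid y z i = (j - i) * z u - ∑ w ∈ Ico i j, data y w := by
    rw [cumResid, cumResid, ← sum_Ico_eq_sub _ hij.le, sum_sub_distrib, sum_congr rfl hconst,
      sum_const, Nat.card_Ico, nsmul_eq_mul, Nat.cast_sub hij.le]
  rw [hz.cumResid_of_isBreak hj (isBreak_nextBreak u),
    hz.cumResid_of_isBreak (by omega) (isBreak_prevBreak u)] at hsum
  have : ((j : ℝ) - i) ≠ 0 := sub_ne_zero.mpr (by exact_mod_cast hij.ne')
  change blockMean y α i j (jumpSign z i) (jumpSign z j) γ = z u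
  rw [blockMean, div_eq_iff this]
  linarith

lemma ordConnected_setOf_abs_add_mul_le (P Q w : ℝ) :
    {γ : ℝ | |P + γ * Q| ≤ γ * w}.OrdConnected := by
  refine ⟨fun a ha b hb γ ⟨hγa, hγb⟩ => ?_⟩
  simp only [Set.mem_ofPred_eq, abs_le] at ha hb ⊢
  constructor
  · rcases le_total 0 (Q + w) with h | h <;> nlinarith
  · rcases le_total 0 (Q - w) with h | h <;> nlinarith

variable (y α) in
def feasibleSet (i j : ℕ) (si sj : ℝ) : Set ℝ :=
  {γ | ∀ m, i < m → m < j → |blockResid y α i j si sj γ m| ≤ γ * weight α m}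

lemma ordConnected_feasibleSet (i j : ℕ) (si sj : ℝ) :
    (feasibleSet y α i j si sj).OrdConnected := by
  refine ⟨fun a ha b hb γ hγ m him hmj => ?_⟩
  have key := (ordConnected_setOf_abs_add_mul_le (blockResid y α i j si sj 0 m)
    (blockResid y α i j si sj 1 m - blockResid y α i j si sj 0 m) (weight α m)).out
  simp only [Set.mem_ofPred_eq, ← blockResid_eq_add_mul] at key
  exact key (ha m him hmj) (hb m him hmj) hγ

variable (y α) in
/-- A block `[i, j)` with `i + 1 < j ≤ n + 1` is encoded as `⟨j - 1, i⟩`. -/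
noncomputable def criticalValues : Finset ℝ :=
  (((range (n + 1)).sigma fun j => range j) ×ˢ (({1, -1} : Finset ℝ) ×ˢ {1, -1})).biUnion
    fun q => {sInf (feasibleSet y α q.1.2 (q.1.1 + 1) q.2.1 q.2.2),
      sSup (feasibleSet y α q.1.2 (q.1.1 + 1) q.2.1 q.2.2)}

lemma card_criticalValues_le : (criticalValues y α).card ≤ 8 * (n + 1).choose 2 := by
  have hsigns : ({1, -1} : Finset ℝ).card = 2 := card_pair (by norm_num)
  have hblocks : ((range (n + 1)).sigma fun j => range j).card = (n + 1).choose 2 := by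
    simp only [card_sigma, card_range, sum_range_id, Nat.choose_two_right]
  calc (criticalValues y α).card
      ≤ ∑ _q ∈ ((range (n + 1)).sigma fun j => range j) ×ˢ
          (({1, -1} : Finset ℝ) ×ˢ {1, -1}), 2 :=
        card_biUnion_le.trans (sum_le_sum fun _ _ => card_le_two)
    _ = 8 * (n + 1).choose 2 := by
        rw [sum_const, smul_eq_mul, card_product, card_product, hsigns, hblocks]
        ring

lemma jumpSign_mem (x : ℕ → ℝ) (m : ℕ) : jumpSign x m ∈ ({1, -1} : Finset ℝ) := by
  unfold jumpSign
  split_ifs <;> simp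

lemma feasibleSet_mem_nhds {γ : ℝ} (hγ : γ ∉ criticalValues y α) {i j : ℕ} (hij : i + 1 < j)
    (hj : j ≤ n + 1) {si sj : ℝ} (hsi : si ∈ ({1, -1} : Finset ℝ))
    (hsj : sj ∈ ({1, -1} : Finset ℝ)) (hmem : γ ∈ feasibleSet y α i j si sj) :
    feasibleSet y α i j si sj ∈ 𝓝 γ := by
  have hq : ((⟨j - 1, i⟩ : Σ _ : ℕ, ℕ), (si, sj)) ∈
      ((range (n + 1)).sigma fun j => range j) ×ˢ (({1, -1} : Finset ℝ) ×ˢ {1, -1}) :=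
    mem_product.mpr ⟨mem_sigma.mpr ⟨Finset.mem_range.mpr (show j - 1 < n + 1 by omega),
      Finset.mem_range.mpr (show i < j - 1 by omega)⟩, mem_product.mpr ⟨hsi, hsj⟩⟩
  have hsub := subset_biUnion_of_mem (fun q : (Σ _ : ℕ, ℕ) × ℝ × ℝ =>
      ({sInf (feasibleSet y α q.1.2 (q.1.1 + 1) q.2.1 q.2.2),
        sSup (feasibleSet y α q.1.2 (q.1.1 + 1) q.2.1 q.2.2)} : Finset ℝ)) hq
  simp only [Nat.sub_add_cancel (by omega : 1 ≤ j)] at hsub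
  refine (ordConnected_feasibleSet i j si sj).mem_nhds_of_ne_csInf_of_ne_csSup hmem ?_ ?_ <;>
    rintro rfl <;> exact hγ (hsub (by simp))

lemma eventually_isSubgradAt_candidate_of_isBreak (hα : ∀ t, 0 ≤ α t) {γ₀ : ℝ} (hγ₀ : 0 < γ₀)
    {z : ℕ → ℝ} (hz : IsKKT y α γ₀ z) {m : ℕ} (hm : m ≤ n + 1) (hb : IsBreak n z m) :
    ∀ᶠ γ in 𝓝 γ₀, IsSubgradAt y α γ (candidate y α z γ) m := by
  have hresid : ∀ γ, cumResid y (candidate y α z γ) m = γ * jumpSign z m * weight α m :=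
    fun γ => by rw [cumResid_candidate z γ hm, prevBreak_eq_self hb, blockResid_self]
  by_cases hw : weight α m = 0
  · exact Eventually.of_forall fun γ => by simp [IsSubgradAt, hresid, hw]
  have hmn : m ≠ 0 ∧ m ≤ n := by
    by_contra h
    exact hw (by rw [weight, dif_neg h])
  have hjump : z (m - 1) ≠ z m := by
    rcases hb with h | h | h
    exacts [absurd h hmn.1, absurd h (not_lt.mpr hmn.2), h]
  set D := fun γ => candidate y α z γ m - candidate y α z γ (m - 1)
  have hD : Continuous D := (continuous_candidate z m).sub (continuous_candidate z (m - 1))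
  have hD₀ : D γ₀ = z m - z (m - 1) := by
    simp only [D, candidate_of_isKKT hz hmn.2, candidate_of_isKKT hz (by omega : m - 1 ≤ n)]
  have hsign : ∀ᶠ γ in 𝓝 γ₀, jumpSign z m * D γ = |D γ| := by
    unfold jumpSign
    split_ifs with hlt
    · filter_upwards [continuousAt_const.eventually_lt hD.continuousAt (show 0 < D γ₀ by
        rw [hD₀]; linarith)] with γ hγ
      rw [abs_of_pos hγ, one_mul]
    · filter_upwards [hD.continuousAt.eventually_lt continuousAt_const (show D γ₀ < 0 by
        rw [hD₀]; exact sub_neg.mpr (lt_of_le_of_ne (not_lt.mp hlt) (Ne.symm hjump)))] with γ hγ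
      rw [abs_of_neg hγ]
      ring
  filter_upwards [hsign, eventually_gt_nhds hγ₀] with γ hsign hγ
  refine ⟨?_, ?_⟩
  · have : |jumpSign z m| = 1 := by unfold jumpSign; split_ifs <;> simp
    rw [hresid, abs_mul, abs_mul, this, abs_of_pos hγ, abs_of_nonneg (weight_nonneg hα m), mul_one]
  · rw [hresid, ← hsign]
    ring

lemma eventually_isSubgradAt_candidate_of_not_isBreak {γ₀ : ℝ}
    (hcrit : γ₀ ∉ criticalValues y α) {z : ℕ → ℝ} (hz : IsKKT y α γ₀ z) {m : ℕ}
    (hm : m ≤ n + 1) (hb : ¬ IsBreak n z m) :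
    ∀ᶠ γ in 𝓝 γ₀, IsSubgradAt y α γ (candidate y α z γ) m := by
  set i := prevBreak n z m
  set j := nextBreak n z m
  have him : i < m := lt_of_le_of_ne (prevBreak_le m) fun h => hb (h ▸ isBreak_prevBreak m)
  have hmj : m < j := lt_nextBreak m
  have hj : j ≤ n + 1 := nextBreak_le (by by_contra h; exact hb (Or.inr (Or.inl (by omega))))
  have hfeas : γ₀ ∈ feasibleSet y α i j (jumpSign z i) (jumpSign z j) := by
    intro m' him' hm'j
    obtain ⟨hp, hn⟩ := prevBreak_eq_and_nextBreak_eq (x := z) him'.le hm'j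
    have hcongr : cumResid y z m' = cumResid y (candidate y α z γ₀) m' :=
      cumResid_congr fun u hu => (candidate_of_isKKT hz (by omega)).symm
    have := (hz m' (by omega)).1
    rwa [hcongr, cumResid_candidate z γ₀ (by omega), hp, hn] at this
  filter_upwards [feasibleSet_mem_nhds hcrit (by omega) hj (jumpSign_mem z i) (jumpSign_mem z j)
    hfeas] with γ hγ
  refine ⟨?_, ?_⟩
  · rw [cumResid_candidate z γ hm]
    exact hγ m him hmj
  · simp [candidate_sub_one z γ hb]

lemma eventually_isKKT_candidate (hα : ∀ t, 0 ≤ α t) {γ₀ : ℝ} (hγ₀ : 0 < γ₀)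
    (hcrit : γ₀ ∉ criticalValues y α) {z : ℕ → ℝ} (hz : IsKKT y α γ₀ z) :
    ∀ᶠ γ in 𝓝 γ₀, IsKKT y α γ (candidate y α z γ) :=
  (Set.finite_Iic (n + 1)).eventually_all.mpr fun m (hm : m ≤ n + 1) => by
    by_cases hb : IsBreak n z m
    · exact eventually_isSubgradAt_candidate_of_isBreak hα hγ₀ hz hm hb
    · exact eventually_isSubgradAt_candidate_of_not_isBreak hcrit hz hm hb

lemma exists_affine_on_closure (hα : ∀ t, 0 ≤ α t) {X : ℝ → ℕ → ℝ}
    (hX : ∀ γ, 0 ≤ γ → IsMinimizer y α γ (X γ)) {I : Set ℝ} (hI : IsOpen I)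
    (hI' : IsPreconnected I) (hpos : I ⊆ Set.Ioi 0) (hcrit : ∀ γ ∈ I, γ ∉ criticalValues y α)
    {u : ℕ} (hu : u ≤ n) : ∃ a b : ℝ, ∀ γ ∈ closure I, X γ u = a + γ * b := by
  have hlocal : ∀ γ₀ ∈ I, ∃ a b : ℝ, (fun γ => X γ u) =ᶠ[𝓝 γ₀] fun γ => a + γ * b := by
    intro γ₀ hγ₀
    have hpos₀ : 0 < γ₀ := hpos hγ₀
    have hz := isKKT_of_isMinimizer hα hpos₀.le (hX γ₀ hpos₀.le)
    refine ⟨candidate y α (X γ₀) 0 u,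
      candidate y α (X γ₀) 1 u - candidate y α (X γ₀) 0 u, ?_⟩
    filter_upwards [eventually_isKKT_candidate hα hpos₀ (hcrit γ₀ hγ₀) hz,
      eventually_gt_nhds hpos₀] with γ hkkt hγ
    rw [← hkkt.eq_of_isMinimizer (hX γ hγ.le) hu, candidate_eq_add_mul]
  obtain ⟨a, b, hab⟩ := hI.exists_affine_of_locally_affine hI' hlocal
  have hcl : closure I ⊆ Set.Ici 0 :=
    closure_minimal (hpos.trans Set.Ioi_subset_Ici_self) isClosed_Ici
  exact ⟨a, b, fun γ hγ => Set.EqOn.of_subset_closure (f := fun γ => X γ u)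
    (g := fun γ => a + γ * b) hab ((continuousOn_minimizer hα hX hu).mono hcl) (by fun_prop)
    subset_closure subset_rfl hγ⟩

lemma exists_affine_on_closure_of_forall_fusedObj_le (hα : ∀ t, 0 ≤ α t)
    {x : ℝ → Fin (n + 1) → ℝ} (hx : ∀ γ, 0 ≤ γ → ∀ v, fusedObj n y α γ (x γ) ≤ fusedObj n y α γ v)
    {I : Set ℝ} (hI : IsOpen I) (hI' : IsPreconnected I) (hpos : I ⊆ Set.Ioi 0)
    (hcrit : ∀ γ ∈ I, γ ∉ criticalValues y α) :
    ∃ a b : Fin (n + 1) → ℝ, ∀ γ ∈ closure I, ∀ t, x γ t = a t + γ * b t := by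
  set X : ℝ → ℕ → ℝ := fun γ u => if h : u < n + 1 then x γ ⟨u, h⟩ else 0
  have hxX : ∀ γ, (fun t : Fin (n + 1) => X γ t) = x γ := fun γ =>
    funext fun t => by simp [X, not_lt.mpr t.is_le]
  have hX : ∀ γ, 0 ≤ γ → IsMinimizer y α γ (X γ) := fun γ hγ v => by
    rw [← fusedObj_eq_obj, ← fusedObj_eq_obj, hxX]
    exact hx γ hγ _
  choose a b hab using fun t : Fin (n + 1) =>
    exists_affine_on_closure hα hX hI hI' hpos hcrit t.is_le
  exact ⟨a, b, fun γ hγ t => by rw [← hxX]; exact hab t γ hγ⟩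

end FusedLasso

open FusedLasso in
theorem weighted_fused_lasso_quadratic_segments (n : ℕ)
    (y : Fin (n + 1) → ℝ) (α : Fin n → ℝ) (hα : ∀ t, 0 ≤ α t)
    (x : ℝ → Fin (n + 1) → ℝ)
    (hx : ∀ γ, 0 ≤ γ → ∀ v, fusedObj n y α γ (x γ) ≤ fusedObj n y α γ v) :
    ∃ (k : ℕ) (c : Fin (k + 1) → ℝ),
      k + 1 ≤ 8 * Nat.choose (n + 1) 2 + 1 ∧
      c 0 = 0 ∧ StrictMono c ∧
      (∀ i : Fin k, ∃ a b : Fin (n + 1) → ℝ,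
        ∀ γ ∈ Set.Icc (c i.castSucc) (c i.succ), ∀ t, x γ t = a t + γ * b t) ∧
      (∃ a b : Fin (n + 1) → ℝ,
        ∀ γ ∈ Set.Ici (c (Fin.last k)), ∀ t, x γ t = a t + γ * b t) := by
  obtain ⟨k, c, hk, hc0, hmono, hgaps, hlast⟩ :=
    exists_strictMono_partition_avoiding (criticalValues y α)
  have hc : ∀ i, 0 ≤ c i := fun i => hc0 ▸ hmono.monotone (Fin.zero_le i)
  refine ⟨k, c, by linarith [card_criticalValues_le (y := y) (α := α)], hc0, hmono,
    fun i => ?_, ?_⟩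
  · rw [← closure_Ioo (hmono Fin.castSucc_lt_succ).ne]
    exact exists_affine_on_closure_of_forall_fusedObj_le hα hx isOpen_Ioo isPreconnected_Ioo
      (fun γ hγ => (hc _).trans_lt hγ.1) (hgaps i)
  · rw [← closure_Ioi]
    exact exists_affine_on_closure_of_forall_fusedObj_le hα hx isOpen_Ioi isPreconnected_Ioi
      (fun γ hγ => (hc _).trans_lt hγ) hlast
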